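/- The Neumann jump operator N is symmetric positive definite, and the pushforward of the Gaussian measure γ_M on ℝ^I under the linear map T : ℝ^I → ℝ^L × ℝ^D × ℝ^R defined by T(x) = ( x_L + (M_LL)⁻¹ M_LD x_D , x_D , x_R + (M_RR)⁻¹ M_RD x_D ) is the product measure γ_{M_LL} ⊗ γ_N ⊗ γ_{M_RR}. In particular, under γ_M the three random vectors φ_l = x_L + (M_LL)⁻¹ M_LD x_D, w = x_D and φ_r = x_R + (M_RR)⁻¹ M_RD x_D are mutually independent, centered Gaussian with covariance matrices (M_LL)⁻¹, N⁻¹ and (M_RR)⁻¹ respectively. (Decomposition of the discrete free field as φ = φ_l + Pw + φ_r with independent components.) -/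

import Mathlib

open Matrix MeasureTheory

/-- The block of a matrix corresponding to two finite index subsets. -/
def finsetBlock {I : Type*} (M : Matrix I I ℝ) (S T : Finset I) : Matrix ↥S ↥T ℝ :=
  M.submatrix (fun i => (i : I)) (fun j => (j : I))

/-- The centered Gaussian measure on `ℝ^J` with density
`(2π)^{-|J|/2} (det Q)^{1/2} exp(-½ xᵀ Q x)` with respect to Lebesgue measure
(its covariance matrix is `Q⁻¹`). -/
noncomputable def gaussianOf {J : Type*} [Fintype J] [DecidableEq J] (Q : Matrix J J ℝ) :
    Measure (J → ℝ) :=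
  volume.withDensity fun x =>
    ENNReal.ofReal (Real.sqrt (Q.det / (2 * Real.pi) ^ (Fintype.card J)) *
      Real.exp (-(1/2) * (x ⬝ᵥ Q.mulVec x)))

/-!
Reindex `I` as `L ⊕ D ⊕ R`. Since `M_LR = 0`, `M` becomes block tridiagonal, and taking Schur
complements first of `M_LL` and then of `M_RR` completes the square:
`xᵀ M x = φ_lᵀ M_LL φ_l + wᵀ N w + φ_rᵀ M_RR φ_r` and `det M = det M_LL · det N · det M_RR`.
Positivity of `N` follows by choosing `x` with `φ_l = φ_r = 0`. So the density of `γ_M` at `x` is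
the product of the densities of the three factors at `T x`, and `T` preserves Lebesgue measure,
being a coordinate split followed by the shear `(a, b, c) ↦ (a + P b, b, c + Q b)` with
`P = M_LL⁻¹ M_LD` and `Q = M_RR⁻¹ M_RD`.
-/

open scoped ENNReal

namespace Matrix

lemma dotProduct_submatrix_mulVec_equiv {m n α : Type*} [Fintype m] [Fintype n]
    [CommSemiring α] (M : Matrix n n α) (e : m ≃ n) (x : n → α) :
    (x ∘ e) ⬝ᵥ M.submatrix e e *ᵥ (x ∘ e) = x ⬝ᵥ M *ᵥ x := by
  rw [submatrix_mulVec_equiv, Function.comp_assoc, e.self_comp_symm, Function.comp_id,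
    comp_equiv_dotProduct_comp_equiv]

variable {𝕜 l d r : Type*}

/-- The block matrix `[[A, B, 0], [Bᴴ, Dm, Cᴴ], [0, C, E]]`. -/
def blockTridiag [Zero 𝕜] [Star 𝕜] (A : Matrix l l 𝕜) (B : Matrix l d 𝕜) (Dm : Matrix d d 𝕜)
    (C : Matrix r d 𝕜) (E : Matrix r r 𝕜) : Matrix (l ⊕ d ⊕ r) (l ⊕ d ⊕ r) 𝕜 :=
  fromBlocks A (fromCols B 0) (fromCols B 0)ᴴ (fromBlocks Dm Cᴴ C E)

variable [CommRing 𝕜] [StarRing 𝕜] [Fintype l] [DecidableEq l]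
  (A : Matrix l l 𝕜) (B : Matrix l d 𝕜) (Dm : Matrix d d 𝕜) (C : Matrix r d 𝕜) (E : Matrix r r 𝕜)

lemma fromBlocks_sub_conjTranspose_fromCols_mul_mul :
    fromBlocks Dm Cᴴ C E - (fromCols B (0 : Matrix l r 𝕜))ᴴ * A⁻¹ * fromCols B 0
      = fromBlocks (Dm - Bᴴ * A⁻¹ * B) Cᴴ C E := by
  rw [conjTranspose_fromCols_eq_fromRows_conjTranspose, fromRows_mul, fromRows_mul_fromCols]
  ext (i | i) (j | j) <;> simp

variable [Fintype d] [Fintype r] [DecidableEq r]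

lemma det_blockTridiag [DecidableEq d] [Invertible A] [Invertible E] :
    (blockTridiag A B Dm C E).det
      = A.det * ((Dm - Bᴴ * A⁻¹ * B - Cᴴ * E⁻¹ * C).det * E.det) := by
  rw [blockTridiag, det_fromBlocks₁₁, invOf_eq_nonsing_inv,
    fromBlocks_sub_conjTranspose_fromCols_mul_mul, det_fromBlocks₂₂, invOf_eq_nonsing_inv,
    mul_comm E.det]

lemma dotProduct_blockTridiag_mulVec [Invertible A] [Invertible E] (hA : A.IsHermitian)
    (hE : E.IsHermitian) (x : l → 𝕜) (y : d → 𝕜) (z : r → 𝕜) :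
    star (x ⊕ᵥ (y ⊕ᵥ z)) ⬝ᵥ blockTridiag A B Dm C E *ᵥ (x ⊕ᵥ (y ⊕ᵥ z)) =
      star (x + (A⁻¹ * B) *ᵥ y) ⬝ᵥ A *ᵥ (x + (A⁻¹ * B) *ᵥ y)
        + (star y ⬝ᵥ (Dm - Bᴴ * A⁻¹ * B - Cᴴ * E⁻¹ * C) *ᵥ y
          + star (z + (E⁻¹ * C) *ᵥ y) ⬝ᵥ E *ᵥ (z + (E⁻¹ * C) *ᵥ y)) := by
  have hshift : (A⁻¹ * fromCols B (0 : Matrix l r 𝕜)) *ᵥ (y ⊕ᵥ z) = (A⁻¹ * B) *ᵥ y := by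
    rw [mul_fromCols, Matrix.mul_zero, fromCols_mulVec_sumElim, zero_mulVec, add_zero]
  have h₂₂ := schur_complement_eq₂₂ (Dm - Bᴴ * A⁻¹ * B) Cᴴ y z hE
  rw [conjTranspose_conjTranspose] at h₂₂
  rw [dotProduct_mulVec, blockTridiag, schur_complement_eq₁₁ _ _ _ _ hA, hshift,
    fromBlocks_sub_conjTranspose_fromCols_mul_mul, h₂₂, ← dotProduct_mulVec,
    ← dotProduct_mulVec, ← dotProduct_mulVec, add_comm z, add_comm (star y ⬝ᵥ _)]

lemma PosDef.blockTridiag_schur [PartialOrder 𝕜] [Invertible A] [Invertible E]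
    (h : (blockTridiag A B Dm C E).PosDef) (hA : A.IsHermitian) (hE : E.IsHermitian) :
    (Dm - Bᴴ * A⁻¹ * B - Cᴴ * E⁻¹ * C).PosDef := by
  have hDm : Dm.IsHermitian :=
    (isHermitian_fromBlocks_iff.1 (isHermitian_fromBlocks_iff.1 h.isHermitian).2.2.2).1
  refine .of_dotProduct_mulVec_pos ?_ fun y hy => ?_
  · exact (hDm.sub (isHermitian_conjTranspose_mul_mul B hA.inv)).sub
      (isHermitian_conjTranspose_mul_mul C hE.inv)
  · have hv : -((A⁻¹ * B) *ᵥ y) ⊕ᵥ (y ⊕ᵥ -((E⁻¹ * C) *ᵥ y)) ≠ 0 := fun h0 =>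
      hy (funext fun i => congrFun h0 (Sum.inr (Sum.inl i)))
    simpa [dotProduct_blockTridiag_mulVec A B Dm C E hA hE] using h.dotProduct_mulVec_pos hv

end Matrix

namespace MeasureTheory

variable {α β G : Type*} [MeasurableSpace α] [MeasurableSpace β] [MeasurableSpace G]

lemma MeasurePreserving.map_withDensity_comp {μ : Measure α} {ν : Measure β} {T : α → β}
    (hT : MeasurePreserving T μ ν) {g : β → ℝ≥0∞} (hg : Measurable g) :
    Measure.map T (μ.withDensity (g ∘ T)) = ν.withDensity g := by
  ext s hs
  rw [Measure.map_apply hT.measurable hs, withDensity_apply _ (hT.measurable hs),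
    withDensity_apply _ hs, ← hT.map_eq, setLIntegral_map hs hg hT.measurable]
  rfl

variable [AddGroup G] [MeasurableAdd₂ G] (μ : Measure α) (ν : Measure G)
  [SFinite μ] [SFinite ν] [ν.IsAddRightInvariant] {f : α → G}

lemma measurePreserving_prod_add_comp_fst (hf : Measurable f) :
    MeasurePreserving (fun p : α × G => (p.1, p.2 + f p.1)) (μ.prod ν) (μ.prod ν) :=
  (MeasurePreserving.id μ).skew_product (measurable_snd.add (hf.comp measurable_fst))
    (ae_of_all _ fun a => map_add_right_eq_self ν (f a))

lemma measurePreserving_prod_add_comp_snd (hf : Measurable f) :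
    MeasurePreserving (fun p : G × α => (p.1 + f p.2, p.2)) (ν.prod μ) (ν.prod μ) :=
  Measure.measurePreserving_swap.comp
    ((measurePreserving_prod_add_comp_fst μ ν hf).comp Measure.measurePreserving_swap)

end MeasureTheory

lemma measurePreserving_pi_equiv_sum_sum {X l d r I : Type*} [Fintype l] [Fintype d] [Fintype r]
    [Fintype I] [MeasureSpace X] [SigmaFinite (volume : Measure X)] (e : l ⊕ d ⊕ r ≃ I) :
    MeasurePreserving (fun x : I → X =>
        (fun a => x (e (.inl a)), fun b => x (e (.inr (.inl b))), fun c => x (e (.inr (.inr c)))))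
      volume volume :=
  ((MeasurePreserving.id volume).prod
      (volume_measurePreserving_sumPiEquivProdPi fun _ => X)).comp
    ((volume_measurePreserving_sumPiEquivProdPi fun _ => X).comp
      (volume_measurePreserving_piCongrLeft (fun _ => X) e).symm)

lemma measurePreserving_add_mulVec_add_mulVec {l d r : Type*} [Fintype l] [Fintype d] [Fintype r]
    (P : Matrix l d ℝ) (Q : Matrix r d ℝ) :
    MeasurePreserving (fun p : (l → ℝ) × (d → ℝ) × (r → ℝ) =>
        (p.1 + P *ᵥ p.2.1, p.2.1, p.2.2 + Q *ᵥ p.2.1)) volume volume :=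
  (measurePreserving_prod_add_comp_snd _ _
      (continuous_const.matrix_mulVec continuous_fst).measurable).comp
    ((MeasurePreserving.id volume).prod
      (measurePreserving_prod_add_comp_fst _ _
        (continuous_const.matrix_mulVec continuous_id).measurable))

section Gaussian

variable {J J₁ J₂ J₃ : Type*} [Fintype J] [DecidableEq J] [Fintype J₁] [DecidableEq J₁]
  [Fintype J₂] [DecidableEq J₂] [Fintype J₃] [DecidableEq J₃]

noncomputable def gaussianPDF (Q : Matrix J J ℝ) (x : J → ℝ) : ℝ :=
  Real.sqrt (Q.det / (2 * Real.pi) ^ Fintype.card J) * Real.exp (-(1/2) * (x ⬝ᵥ Q *ᵥ x))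

lemma gaussianOf_eq_withDensity (Q : Matrix J J ℝ) :
    gaussianOf Q = volume.withDensity fun x => ENNReal.ofReal (gaussianPDF Q x) :=
  rfl

lemma gaussianPDF_nonneg (Q : Matrix J J ℝ) (x : J → ℝ) : 0 ≤ gaussianPDF Q x := by
  unfold gaussianPDF; positivity

@[fun_prop]
lemma measurable_gaussianPDF (Q : Matrix J J ℝ) : Measurable (gaussianPDF Q) := by
  unfold gaussianPDF; fun_prop

lemma gaussianPDF_eq_mul_mul {Q : Matrix J J ℝ} {Q₁ : Matrix J₁ J₁ ℝ} {Q₂ : Matrix J₂ J₂ ℝ}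
    {Q₃ : Matrix J₃ J₃ ℝ} {x : J → ℝ} {y₁ : J₁ → ℝ} {y₂ : J₂ → ℝ} {y₃ : J₃ → ℝ}
    (hcard : Fintype.card J = Fintype.card J₁ + (Fintype.card J₂ + Fintype.card J₃))
    (hdet : Q.det = Q₁.det * (Q₂.det * Q₃.det)) (h₁ : 0 ≤ Q₁.det) (h₂ : 0 ≤ Q₂.det)
    (hquad : x ⬝ᵥ Q *ᵥ x = y₁ ⬝ᵥ Q₁ *ᵥ y₁ + (y₂ ⬝ᵥ Q₂ *ᵥ y₂ + y₃ ⬝ᵥ Q₃ *ᵥ y₃)) :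
    gaussianPDF Q x = gaussianPDF Q₁ y₁ * (gaussianPDF Q₂ y₂ * gaussianPDF Q₃ y₃) := by
  unfold gaussianPDF
  rw [hcard, hdet, hquad, pow_add, pow_add, mul_div_mul_comm, mul_div_mul_comm,
    Real.sqrt_mul (div_nonneg h₁ (by positivity)), Real.sqrt_mul (div_nonneg h₂ (by positivity)),
    mul_add, mul_add, Real.exp_add, Real.exp_add]
  ring

lemma map_gaussianOf_eq_prod {Q : Matrix J J ℝ} {Q₁ : Matrix J₁ J₁ ℝ} {Q₂ : Matrix J₂ J₂ ℝ}
    {Q₃ : Matrix J₃ J₃ ℝ} {T : (J → ℝ) → (J₁ → ℝ) × (J₂ → ℝ) × (J₃ → ℝ)}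
    (hT : MeasurePreserving T volume volume)
    (hpdf : ∀ x, gaussianPDF Q x =
      gaussianPDF Q₁ (T x).1 * (gaussianPDF Q₂ (T x).2.1 * gaussianPDF Q₃ (T x).2.2)) :
    Measure.map T (gaussianOf Q) = (gaussianOf Q₁).prod ((gaussianOf Q₂).prod (gaussianOf Q₃)) := by
  simp only [gaussianOf_eq_withDensity]
  rw [prod_withDensity (by fun_prop) (by fun_prop), prod_withDensity (by fun_prop) (by fun_prop)]
  refine .trans ?_ (hT.map_withDensity_comp (by fun_prop))
  congr 2 with x
  simp only [Function.comp_apply, hpdf, ENNReal.ofReal_mul (gaussianPDF_nonneg _ _)]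

end Gaussian

section NeumannJump

variable {I : Type*} {M : Matrix I I ℝ}

lemma finsetBlock_conjTranspose (hM : M.IsHermitian) (S T : Finset I) :
    (finsetBlock M S T)ᴴ = finsetBlock M T S := by
  rw [finsetBlock, conjTranspose_submatrix, hM]
  rfl

lemma Matrix.PosDef.finsetBlock (hM : M.PosDef) (S : Finset I) : (finsetBlock M S S).PosDef :=
  hM.submatrix Subtype.val_injective

variable [DecidableEq I] {L D R : Finset I}

noncomputable def neumannJump (M : Matrix I I ℝ) (L D R : Finset I) : Matrix ↥D ↥D ℝ :=
  finsetBlock M D D - finsetBlock M D L * (finsetBlock M L L)⁻¹ * finsetBlock M L D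
    - finsetBlock M D R * (finsetBlock M R R)⁻¹ * finsetBlock M R D

/-- The coordinates `(φ_l, w, φ_r)` of the decomposition `x = φ_l + P w + φ_r`. -/
noncomputable def fieldDecomposition (M : Matrix I I ℝ) (L D R : Finset I) (x : I → ℝ) :
    (↥L → ℝ) × (↥D → ℝ) × (↥R → ℝ) :=
  (fun l : ↥L => x l + ((finsetBlock M L L)⁻¹ * finsetBlock M L D).mulVec (fun d : ↥D => x d) l,
    fun d : ↥D => x d,
    fun r : ↥R => x r + ((finsetBlock M R R)⁻¹ * finsetBlock M R D).mulVec (fun d : ↥D => x d) r)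

lemma neumannJump_eq_schur (hM : M.IsHermitian) :
    neumannJump M L D R = finsetBlock M D D
      - (finsetBlock M L D)ᴴ * (finsetBlock M L L)⁻¹ * finsetBlock M L D
      - (finsetBlock M R D)ᴴ * (finsetBlock M R R)⁻¹ * finsetBlock M R D := by
  simp only [neumannJump, finsetBlock_conjTranspose hM]

variable [Fintype I]

noncomputable def partitionEquiv (hLD : Disjoint L D) (hLR : Disjoint L R) (hDR : Disjoint D R)
    (hcover : L ∪ D ∪ R = Finset.univ) : ↥L ⊕ ↥D ⊕ ↥R ≃ I :=
  Equiv.ofBijective (Sum.elim Subtype.val (Sum.elim Subtype.val Subtype.val)) <| by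
    refine ⟨Subtype.val_injective.sumElim (Subtype.val_injective.sumElim Subtype.val_injective
      fun d r h => Finset.disjoint_left.1 hDR d.2 (h ▸ r.2)) ?_, fun i => ?_⟩
    · rintro l (d | r) h
      exacts [Finset.disjoint_left.1 hLD l.2 (h ▸ d.2), Finset.disjoint_left.1 hLR l.2 (h ▸ r.2)]
    · have hi : i ∈ L ∪ D ∪ R := hcover ▸ Finset.mem_univ i
      simp only [Finset.mem_union] at hi
      rcases hi with (hi | hi) | hi
      exacts [⟨.inl ⟨i, hi⟩, rfl⟩, ⟨.inr (.inl ⟨i, hi⟩), rfl⟩, ⟨.inr (.inr ⟨i, hi⟩), rfl⟩]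

lemma comp_partitionEquiv (hLD : Disjoint L D) (hLR : Disjoint L R) (hDR : Disjoint D R)
    (hcover : L ∪ D ∪ R = Finset.univ) (x : I → ℝ) :
    x ∘ partitionEquiv hLD hLR hDR hcover
      = (fun l : ↥L => x l) ⊕ᵥ ((fun d : ↥D => x d) ⊕ᵥ fun r : ↥R => x r) := by
  ext (a | b | c) <;> rfl

lemma submatrix_partitionEquiv (hLD : Disjoint L D) (hLR : Disjoint L R) (hDR : Disjoint D R)
    (hcover : L ∪ D ∪ R = Finset.univ) (hM : M.IsHermitian)
    (hzero : ∀ x y : I, (x ∈ L ∧ y ∈ R) ∨ (x ∈ R ∧ y ∈ L) → M x y = 0) :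
    M.submatrix (partitionEquiv hLD hLR hDR hcover) (partitionEquiv hLD hLR hDR hcover)
      = blockTridiag (finsetBlock M L L) (finsetBlock M L D) (finsetBlock M D D)
          (finsetBlock M R D) (finsetBlock M R R) := by
  ext (i | i | i) (j | j | j) <;>
    simp only [blockTridiag, finsetBlock, submatrix_apply, conjTranspose_eq_transpose_of_trivial,
      transpose_submatrix, transpose_apply, fromBlocks_apply₁₁, fromBlocks_apply₁₂,
      fromBlocks_apply₂₁, fromBlocks_apply₂₂, fromCols_apply_inl, fromCols_apply_inr,
      Matrix.zero_apply] <;>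
    first
      | rfl
      | exact hzero _ _ (.inl ⟨i.2, j.2⟩)
      | exact hzero _ _ (.inr ⟨i.2, j.2⟩)
      | exact hM.apply _ _

section Decomposition

variable (hLD : Disjoint L D) (hLR : Disjoint L R) (hDR : Disjoint D R)
  (hcover : L ∪ D ∪ R = Finset.univ) (hM : M.PosDef)
  (hzero : ∀ x y : I, (x ∈ L ∧ y ∈ R) ∨ (x ∈ R ∧ y ∈ L) → M x y = 0)
include hLD hLR hDR hcover hM hzero

lemma posDef_neumannJump : (neumannJump M L D R).PosDef := by
  have := (hM.finsetBlock L).isUnit.invertible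
  have := (hM.finsetBlock R).isUnit.invertible
  have hblock := hM.submatrix (partitionEquiv hLD hLR hDR hcover).injective
  rw [submatrix_partitionEquiv hLD hLR hDR hcover hM.1 hzero] at hblock
  rw [neumannJump_eq_schur hM.1]
  exact hblock.blockTridiag_schur _ _ _ _ _ (hM.finsetBlock L).isHermitian
    (hM.finsetBlock R).isHermitian

lemma det_eq_mul_det_neumannJump :
    M.det = (finsetBlock M L L).det * ((neumannJump M L D R).det * (finsetBlock M R R).det) := by
  have := (hM.finsetBlock L).isUnit.invertible
  have := (hM.finsetBlock R).isUnit.invertible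
  rw [← det_submatrix_equiv_self (partitionEquiv hLD hLR hDR hcover),
    submatrix_partitionEquiv hLD hLR hDR hcover hM.1 hzero, det_blockTridiag, neumannJump_eq_schur hM.1]

lemma dotProduct_mulVec_eq_fieldDecomposition (x : I → ℝ) :
    x ⬝ᵥ M *ᵥ x =
      (fieldDecomposition M L D R x).1 ⬝ᵥ finsetBlock M L L *ᵥ (fieldDecomposition M L D R x).1
        + ((fieldDecomposition M L D R x).2.1 ⬝ᵥ neumannJump M L D R *ᵥ
            (fieldDecomposition M L D R x).2.1
          + (fieldDecomposition M L D R x).2.2 ⬝ᵥ finsetBlock M R R *ᵥ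
            (fieldDecomposition M L D R x).2.2) := by
  have := (hM.finsetBlock L).isUnit.invertible
  have := (hM.finsetBlock R).isUnit.invertible
  have h := dotProduct_blockTridiag_mulVec (finsetBlock M L L) (finsetBlock M L D)
    (finsetBlock M D D) (finsetBlock M R D) (finsetBlock M R R)
    (hM.finsetBlock L).isHermitian (hM.finsetBlock R).isHermitian
    (fun l : ↥L => x l) (fun d : ↥D => x d) (fun r : ↥R => x r)
  simp only [star_trivial] at h
  rw [← dotProduct_submatrix_mulVec_equiv M (partitionEquiv hLD hLR hDR hcover),
    comp_partitionEquiv, submatrix_partitionEquiv hLD hLR hDR hcover hM.1 hzero, h,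
    neumannJump_eq_schur hM.1]
  rfl

lemma gaussianPDF_eq_mul_fieldDecomposition (x : I → ℝ) :
    gaussianPDF M x = gaussianPDF (finsetBlock M L L) (fieldDecomposition M L D R x).1 *
      (gaussianPDF (neumannJump M L D R) (fieldDecomposition M L D R x).2.1 *
        gaussianPDF (finsetBlock M R R) (fieldDecomposition M L D R x).2.2) := by
  refine gaussianPDF_eq_mul_mul ?_ (det_eq_mul_det_neumannJump hLD hLR hDR hcover hM hzero)
    (hM.finsetBlock L).det_pos.le
    (posDef_neumannJump hLD hLR hDR hcover hM hzero).det_pos.le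
    (dotProduct_mulVec_eq_fieldDecomposition hLD hLR hDR hcover hM hzero x)
  rw [← Fintype.card_congr (partitionEquiv hLD hLR hDR hcover), Fintype.card_sum, Fintype.card_sum]

end Decomposition

lemma measurePreserving_fieldDecomposition (hLD : Disjoint L D) (hLR : Disjoint L R)
    (hDR : Disjoint D R) (hcover : L ∪ D ∪ R = Finset.univ) :
    MeasurePreserving (fieldDecomposition M L D R) volume volume :=
  (measurePreserving_add_mulVec_add_mulVec _ _).comp
    (measurePreserving_pi_equiv_sum_sum (partitionEquiv hLD hLR hDR hcover))

end NeumannJump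

/-- The Neumann jump operator `N` is symmetric positive definite, and the pushforward of
the Gaussian measure `γ_M` under
`T(x) = (x_L + (M_LL)⁻¹ M_LD x_D, x_D, x_R + (M_RR)⁻¹ M_RD x_D)` is the product measure
`γ_{M_LL} ⊗ γ_N ⊗ γ_{M_RR}`: the discrete free field decomposes as `φ = φ_l + Pw + φ_r`
with independent components. -/
theorem stmt_2 {I : Type*} [Fintype I] [DecidableEq I]
    (L D R : Finset I)
    (hLD : Disjoint L D) (hLR : Disjoint L R) (hDR : Disjoint D R)
    (hcover : L ∪ D ∪ R = Finset.univ)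
    (M : Matrix I I ℝ) (hM : M.PosDef)
    (hzero : ∀ x y : I, (x ∈ L ∧ y ∈ R) ∨ (x ∈ R ∧ y ∈ L) → M x y = 0) :
    (finsetBlock M D D
      - finsetBlock M D L * (finsetBlock M L L)⁻¹ * finsetBlock M L D
      - finsetBlock M D R * (finsetBlock M R R)⁻¹ * finsetBlock M R D).PosDef ∧
    Measure.map
      (fun x : I → ℝ =>
        ((fun l : ↥L => x l + ((finsetBlock M L L)⁻¹ * finsetBlock M L D).mulVec
            (fun d : ↥D => x d) l),
         (fun d : ↥D => x d),
         (fun r : ↥R => x r + ((finsetBlock M R R)⁻¹ * finsetBlock M R D).mulVec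
            (fun d : ↥D => x d) r)))
      (gaussianOf M)
    = (gaussianOf (finsetBlock M L L)).prod
        ((gaussianOf (finsetBlock M D D
          - finsetBlock M D L * (finsetBlock M L L)⁻¹ * finsetBlock M L D
          - finsetBlock M D R * (finsetBlock M R R)⁻¹ * finsetBlock M R D)).prod
          (gaussianOf (finsetBlock M R R))) :=
  ⟨posDef_neumannJump hLD hLR hDR hcover hM hzero,
    map_gaussianOf_eq_prod (measurePreserving_fieldDecomposition hLD hLR hDR hcover)
      (gaussianPDF_eq_mul_fieldDecomposition hLD hLR hDR hcover hM hzero)⟩
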